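/- arXiv:1203.6831 — 3 statements merged into one kernel-verified Lean document; each statement's English description precedes it below -/
import Mathlib

section
/- For every u > 0 and every θ < Φ(u), ∫_0^∞ u e^{−ux} E(e^{θ T_x}) dx = 1 + (θ/(Φ(u) − θ)) · Φ(u)/(μu). -/
open MeasureTheory ProbabilityTheory Filter Set Topology

noncomputable section

/-- The setup of the paper: a driftless Lévy subordinator `Xp` with Lévy measure `ν`
(finite mean `μ`), an independent initial delay `X0` with the stationary delay
distribution, and the associated inverse subordinators. -/
structure LevyCtx (Ω : Type) [MeasureSpace Ω] where
  ν : Measure ℝ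
  μ : ℝ
  Xp : ℝ → Ω → ℝ
  X0 : Ω → ℝ
  prob : IsProbabilityMeasure (ℙ : Measure Ω)
  nu_supp : ν (Set.Iic 0) = 0
  nu_min_fin : (∫⁻ x, ENNReal.ofReal (min 1 x) ∂ν) ≠ ⊤
  mu_pos : 0 < μ
  mu_eq : ∫⁻ x, ENNReal.ofReal x ∂ν = ENNReal.ofReal μ
  Xp_meas : ∀ t, Measurable (Xp t)
  X0_meas : Measurable X0
  Xp_zero : ∀ ω, Xp 0 ω = 0
  Xp_mono : ∀ᵐ ω : Ω, Monotone fun t => Xp t ω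
  Xp_rc : ∀ᵐ ω : Ω, ∀ t : ℝ, ContinuousWithinAt (fun s => Xp s ω) (Set.Ici t) t
  Xp_top : ∀ᵐ ω : Ω, Tendsto (fun t => Xp t ω) atTop atTop
  Xp_laplace : ∀ u : ℝ, 0 ≤ u → ∀ t : ℝ, 0 ≤ t →
    (∫ ω, Real.exp (-(u * Xp t ω))) = Real.exp (-(t * ∫ x, (1 - Real.exp (-(u * x))) ∂ν))
  Xp_stat : ∀ s t : ℝ, 0 ≤ s → s ≤ t →
    Measure.map (fun ω => Xp t ω - Xp s ω) ℙ = Measure.map (Xp (t - s)) ℙ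
  Xp_indep : ∀ (n : ℕ) (t : Fin (n + 1) → ℝ), Monotone t → (∀ i, 0 ≤ t i) →
    iIndepFun
      (fun (i : Fin n) (ω : Ω) => Xp (t i.succ) ω - Xp (t i.castSucc) ω) ℙ
  X0_pos : ∀ᵐ ω : Ω, 0 < X0 ω
  X0_cdf : ∀ x : ℝ, 0 ≤ x →
    (ℙ {ω | X0 ω ≤ x}).toReal = (1 / μ) * ∫ y in (0:ℝ)..x, (ν (Set.Ioi y)).toReal
  X0_indep : IndepFun X0 (fun ω (t : ℝ) => Xp t ω) ℙ

namespace LevyCtx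

variable {Ω : Type} [MeasureSpace Ω] (S : LevyCtx Ω)

/-- The Laplace exponent `Φ(u) = ∫ (1 - e^{-ux}) ν(dx)`. -/
def Phi (u : ℝ) : ℝ := ∫ x, (1 - Real.exp (-(u * x))) ∂S.ν

/-- The inverse (first passage) process of the delayed subordinator `X = X0 + Xp`. -/
def T (x : ℝ) (ω : Ω) : ℝ := sInf {t : ℝ | 0 ≤ t ∧ x < S.X0 ω + S.Xp t ω}

/-- The inverse (first passage) process of the pure subordinator `Xp`. -/
def Tp (x : ℝ) (ω : Ω) : ℝ := sInf {t : ℝ | 0 ≤ t ∧ x < S.Xp t ω}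

/-- The overshoot process `Γ_x = X_{T_x} - x`. -/
def Gshoot (x : ℝ) (ω : Ω) : ℝ := S.X0 ω + S.Xp (S.T x ω) ω - x

end LevyCtx

/-!
Writing `e^{θ T_x} = 1 + θ ∫₀^{T_x} e^{θ t} dt` and using that `{x | t < T_x}` differs from
`{x | X_t ≤ x}` by at most one point, Tonelli turns the left-hand side into
`1 + θ ∫₀^∞ e^{θ t} E(e^{-u X_t}) dt`. By independence `E(e^{-u X_t}) = E(e^{-u X_0}) e^{-t Φ(u)}`,
and `X_0` has density `ν((y, ∞))/μ` on `(0, ∞)`, whose Laplace transform is `Φ(u)/(μ u)` by the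
layer-cake formula; the remaining `t`-integral is `1/(Φ(u) - θ)`.
-/

open scoped ENNReal

lemma mul_indicator_one_apply {α M : Type*} [MulZeroOneClass M] (f : α → M) (s : Set α)
    (a : α) : f a * s.indicator 1 a = s.indicator f a := by
  by_cases ha : a ∈ s <;> simp [ha]

lemma mul_integral_exp_mul (θ s : ℝ) :
    θ * ∫ t in (0:ℝ)..s, Real.exp (θ * t) = Real.exp (θ * s) - 1 := by
  have hderiv (t : ℝ) : HasDerivAt (fun t => Real.exp (θ * t)) (θ * Real.exp (θ * t)) t := by
    simpa [mul_comm] using ((hasDerivAt_id t).const_mul θ).exp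
  rw [← intervalIntegral.integral_const_mul,
    intervalIntegral.integral_eq_sub_of_hasDerivAt (fun t _ => hderiv t)
      ((by fun_prop : Continuous fun t => θ * Real.exp (θ * t)).intervalIntegrable _ _),
    mul_zero, Real.exp_zero]

lemma ofReal_integral_exp_mul_eq_lintegral (θ : ℝ) {s : ℝ} (hs : 0 ≤ s) :
    ENNReal.ofReal (∫ t in (0:ℝ)..s, Real.exp (θ * t))
      = ∫⁻ t in Ioi 0, ENNReal.ofReal (Real.exp (θ * t)) * (Iio s).indicator 1 t := by
  simp_rw [mul_indicator_one_apply (fun t => ENNReal.ofReal (Real.exp (θ * t)))]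
  rw [lintegral_indicator measurableSet_Iio, Measure.restrict_restrict measurableSet_Iio,
    Iio_inter_Ioi, setLIntegral_congr Ioo_ae_eq_Ioc, intervalIntegral.integral_of_le hs,
    ofReal_integral_eq_lintegral_ofReal
      ((by fun_prop : Continuous fun t => Real.exp (θ * t)).integrableOn_Ioc)
      (ae_of_all _ fun t => (Real.exp_pos _).le)]

lemma integrableOn_Ioi_mul_exp_neg_mul {u : ℝ} (hu : 0 < u) (c : ℝ) :
    IntegrableOn (fun x => u * Real.exp (-(u * x))) (Ioi c) := by
  simpa [neg_mul, IntegrableOn] using (exp_neg_integrableOn_Ioi c hu).const_mul u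

lemma integral_Ioi_mul_exp_neg_mul {u : ℝ} (hu : 0 < u) (c : ℝ) :
    ∫ x in Ioi c, u * Real.exp (-(u * x)) = Real.exp (-(u * c)) := by
  simp_rw [← neg_mul]
  rw [integral_const_mul, integral_exp_mul_Ioi (neg_lt_zero.2 hu)]
  field_simp

lemma lintegral_Ioi_mul_exp_neg_mul {u : ℝ} (hu : 0 < u) (c : ℝ) :
    ∫⁻ x in Ioi c, ENNReal.ofReal (u * Real.exp (-(u * x)))
      = ENNReal.ofReal (Real.exp (-(u * c))) := by
  rw [← ofReal_integral_eq_lintegral_ofReal, integral_Ioi_mul_exp_neg_mul hu]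
  · exact integrableOn_Ioi_mul_exp_neg_mul hu c
  · exact ae_of_all _ fun x => by positivity

lemma lintegral_Ioi_zero_mul_exp_neg_mul_indicator {u c : ℝ} (hu : 0 < u) (hc : 0 ≤ c)
    {s : Set ℝ} (hcs : Ioi c ⊆ s) (hsc : s ⊆ Ici c) :
    ∫⁻ x in Ioi 0, ENNReal.ofReal (u * Real.exp (-(u * x))) * s.indicator 1 x
      = ENNReal.ofReal (Real.exp (-(u * c))) := by
  have hs : s =ᵐ[volume] Ioi c :=
    (hsc.eventuallyLE.trans Ioi_ae_eq_Ici.symm.le).antisymm hcs.eventuallyLE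
  simp_rw [mul_indicator_one_apply (fun x => ENNReal.ofReal (u * Real.exp (-(u * x))))]
  rw [lintegral_congr_ae (ae_restrict_of_ae (indicator_ae_eq_of_ae_eq_set hs)),
    lintegral_indicator measurableSet_Ioi, Measure.restrict_restrict measurableSet_Ioi,
    inter_eq_left.2 (Ioi_subset_Ioi hc), lintegral_Ioi_mul_exp_neg_mul hu]

lemma lintegral_lintegral_lintegral_comm {α β γ : Type*} [MeasurableSpace α]
    [MeasurableSpace β] [MeasurableSpace γ] {μ : Measure α} {ν : Measure β} {ρ : Measure γ}
    [SFinite μ] [SFinite ν] [SFinite ρ] {f : α → β → γ → ℝ≥0∞}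
    (hf : Measurable fun p : α × β × γ => f p.1 p.2.1 p.2.2) :
    ∫⁻ a, ∫⁻ b, ∫⁻ c, f a b c ∂ρ ∂ν ∂μ = ∫⁻ c, ∫⁻ b, ∫⁻ a, f a b c ∂μ ∂ν ∂ρ := calc
  _ = ∫⁻ a, ∫⁻ c, ∫⁻ b, f a b c ∂ν ∂ρ ∂μ := lintegral_congr fun _ =>
        lintegral_lintegral_swap (hf.comp measurable_prodMk_left).aemeasurable
  _ = ∫⁻ c, ∫⁻ a, ∫⁻ b, f a b c ∂ν ∂μ ∂ρ := lintegral_lintegral_swap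
        (Measurable.lintegral_prod_right' (f := fun q : (α × γ) × β => f q.1.1 q.2 q.1.2)
          (hf.comp (measurable_fst.fst.prodMk (measurable_snd.prodMk measurable_fst.snd)))
          ).aemeasurable
  _ = ∫⁻ c, ∫⁻ b, ∫⁻ a, f a b c ∂μ ∂ν ∂ρ := lintegral_congr fun _ =>
        lintegral_lintegral_swap
          (hf.comp (measurable_fst.prodMk (measurable_snd.prodMk measurable_const))).aemeasurable

lemma norm_one_sub_exp_neg_mul_le {u x : ℝ} (hu : 0 ≤ u) (hx : 0 < x) :
    ‖1 - Real.exp (-(u * x))‖ ≤ max 1 u * min 1 x := by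
  have hux : 0 ≤ u * x := mul_nonneg hu hx.le
  have hle_one : Real.exp (-(u * x)) ≤ 1 := Real.exp_le_one_iff.2 (by linarith)
  have hlinear : 1 - u * x ≤ Real.exp (-(u * x)) := by
    linarith [Real.add_one_le_exp (-(u * x))]
  rw [Real.norm_eq_abs, abs_of_nonneg (by linarith)]
  rcases le_or_gt x 1 with hx1 | hx1
  · rw [min_eq_right hx1]
    nlinarith [le_max_right 1 u]
  · rw [min_eq_left hx1.le, mul_one]
    linarith [le_max_left 1 u, Real.exp_pos (-(u * x))]

namespace LevyCtx

variable {Ω : Type} [MeasureSpace Ω] (S : LevyCtx Ω)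

lemma nu_ae_pos : ∀ᵐ x ∂S.ν, 0 < x :=
  ae_iff.2 <| measure_mono_null (fun _ hx => not_lt.1 hx) S.nu_supp

lemma nu_Ioi_ne_top {y : ℝ} (hy : 0 < y) : S.ν (Ioi y) ≠ ⊤ := by
  have hmin : 0 < min 1 y := lt_min one_pos hy
  have hbound : ENNReal.ofReal (min 1 y) * S.ν (Ioi y) ≤ ∫⁻ x, ENNReal.ofReal (min 1 x) ∂S.ν :=
    calc ENNReal.ofReal (min 1 y) * S.ν (Ioi y)
        = ∫⁻ _ in Ioi y, ENNReal.ofReal (min 1 y) ∂S.ν := (setLIntegral_const _ _).symm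
      _ ≤ ∫⁻ x in Ioi y, ENNReal.ofReal (min 1 x) ∂S.ν :=
          setLIntegral_mono (by fun_prop) fun x hx =>
            ENNReal.ofReal_le_ofReal (min_le_min le_rfl (le_of_lt hx))
      _ ≤ ∫⁻ x, ENNReal.ofReal (min 1 x) ∂S.ν := setLIntegral_le_lintegral _ _
  intro htop
  rw [htop, ENNReal.mul_top (by simpa using hmin)] at hbound
  exact S.nu_min_fin (top_le_iff.1 hbound)

lemma integrable_one_sub_exp {u : ℝ} (hu : 0 ≤ u) :
    Integrable (fun x => 1 - Real.exp (-(u * x))) S.ν := by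
  have hmin : Integrable (fun x => min 1 x) S.ν := by
    refine ⟨by fun_prop, ?_⟩
    rw [hasFiniteIntegral_iff_ofReal (S.nu_ae_pos.mono fun x hx => le_min zero_le_one hx.le)]
    exact S.nu_min_fin.lt_top
  refine (hmin.const_mul (max 1 u)).mono' (by fun_prop) ?_
  filter_upwards [S.nu_ae_pos] with x hx
  exact norm_one_sub_exp_neg_mul_le hu hx

lemma one_sub_exp_nonneg_ae {u : ℝ} (hu : 0 ≤ u) :
    0 ≤ᵐ[S.ν] fun x => 1 - Real.exp (-(u * x)) := by
  filter_upwards [S.nu_ae_pos] with x hx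
  simpa using Real.exp_le_one_iff.2 (neg_nonpos.2 (mul_nonneg hu hx.le))

lemma Phi_nonneg {u : ℝ} (hu : 0 ≤ u) : 0 ≤ S.Phi u :=
  integral_nonneg_of_ae (S.one_sub_exp_nonneg_ae hu)

lemma lintegral_nu_Ioi : ∫⁻ y in Ioi 0, S.ν (Ioi y) = ENNReal.ofReal S.μ :=
  (lintegral_eq_lintegral_meas_lt S.ν (f := id) (S.nu_ae_pos.mono fun _ hx => hx.le)
    aemeasurable_id).symm.trans S.mu_eq

lemma lintegral_nu_Ioi_mul_exp {u : ℝ} (hu : 0 < u) :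
    ∫⁻ y in Ioi 0, S.ν (Ioi y) * ENNReal.ofReal (Real.exp (-(u * y)))
      = ENNReal.ofReal (S.Phi u / u) := by
  have hprimitive (z : ℝ) : ENNReal.ofReal (∫ t in (0:ℝ)..z, Real.exp (-(u * t)))
      = ENNReal.ofReal u⁻¹ * ENNReal.ofReal (1 - Real.exp (-(u * z))) := by
    rw [← ENNReal.ofReal_mul (by positivity)]
    congr 1
    have h := mul_integral_exp_mul (-u) z
    simp only [neg_mul] at h ⊢
    field_simp
    linarith
  have hlayer := lintegral_comp_eq_lintegral_meas_lt_mul S.ν (f := id)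
    (S.nu_ae_pos.mono fun _ hx => hx.le) aemeasurable_id
    (fun _ _ => (by fun_prop : Continuous fun t => Real.exp (-(u * t))).intervalIntegrable _ _)
    (ae_of_all _ fun t => (Real.exp_pos (-(u * t))).le)
  simp only [id, hprimitive] at hlayer
  refine hlayer.symm.trans ?_
  rw [lintegral_const_mul _ (by fun_prop), ← ofReal_integral_eq_lintegral_ofReal
    (S.integrable_one_sub_exp hu.le)
    (S.one_sub_exp_nonneg_ae hu.le), ← ENNReal.ofReal_mul (by positivity), Phi,
    div_eq_inv_mul]

lemma measurable_nu_Ioi : Measurable fun y => S.ν (Ioi y) :=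
  Antitone.measurable fun _ _ hab => measure_mono (Ioi_subset_Ioi hab)

lemma measure_X0_le {x : ℝ} (hx : 0 ≤ x) :
    ℙ {ω | S.X0 ω ≤ x} = ENNReal.ofReal (1 / S.μ) * ∫⁻ y in Ioc 0 x, S.ν (Ioi y) := by
  have := S.prob
  have := S.mu_pos
  have hfin : ∫⁻ y in Ioc 0 x, S.ν (Ioi y) ≠ ⊤ :=
    ne_top_of_le_ne_top (S.lintegral_nu_Ioi ▸ ENNReal.ofReal_ne_top)
      (lintegral_mono_set Ioc_subset_Ioi_self)
  have hreal : ∫ y in Ioc 0 x, (S.ν (Ioi y)).toReal = (∫⁻ y in Ioc 0 x, S.ν (Ioi y)).toReal :=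
    integral_toReal S.measurable_nu_Ioi.aemeasurable
      (ae_restrict_of_forall_mem measurableSet_Ioc fun y hy => (S.nu_Ioi_ne_top hy.1).lt_top)
  rw [← ENNReal.ofReal_toReal (measure_ne_top _ _), S.X0_cdf x hx,
    intervalIntegral.integral_of_le hx, hreal, ENNReal.ofReal_mul (by positivity),
    ENNReal.ofReal_toReal hfin]

lemma map_X0 : Measure.map S.X0 ℙ
    = ENNReal.ofReal (1 / S.μ) • (volume.restrict (Ioi 0)).withDensity fun y => S.ν (Ioi y) := by
  have := S.prob
  refine Measure.ext_of_Iic _ _ fun x => ?_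
  rw [Measure.map_apply S.X0_meas measurableSet_Iic, Measure.smul_apply,
    withDensity_apply _ measurableSet_Iic, Measure.restrict_restrict measurableSet_Iic,
    Iic_inter_Ioi, smul_eq_mul]
  rcases lt_or_ge x 0 with hx | hx
  · rw [Ioc_eq_empty (by linarith), Measure.restrict_empty, lintegral_zero_measure, mul_zero]
    exact measure_mono_null (fun ω hω => not_lt.2 (le_trans hω hx.le)) (ae_iff.1 S.X0_pos)
  · exact S.measure_X0_le hx

lemma lintegral_exp_X0 {u : ℝ} (hu : 0 < u) :
    ∫⁻ ω, ENNReal.ofReal (Real.exp (-(u * S.X0 ω))) = ENNReal.ofReal (S.Phi u / (S.μ * u)) := by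
  rw [← lintegral_map (f := fun y => ENNReal.ofReal (Real.exp (-(u * y)))) (by fun_prop)
    S.X0_meas, S.map_X0, lintegral_smul_measure,
    lintegral_withDensity_eq_lintegral_mul _ S.measurable_nu_Ioi (by fun_prop)]
  simp only [Pi.mul_apply]
  have := S.mu_pos
  rw [S.lintegral_nu_Ioi_mul_exp hu, smul_eq_mul, ← ENNReal.ofReal_mul (by positivity)]
  congr 1
  field_simp

lemma lintegral_exp_Xp {u t : ℝ} (hu : 0 ≤ u) (ht : 0 ≤ t) :
    ∫⁻ ω, ENNReal.ofReal (Real.exp (-(u * S.Xp t ω)))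
      = ENNReal.ofReal (Real.exp (-(t * S.Phi u))) := by
  have hlaplace := S.Xp_laplace u hu t ht
  rw [← ofReal_integral_eq_lintegral_ofReal
    (Integrable.of_integral_ne_zero (hlaplace ▸ (Real.exp_pos _).ne'))
    (ae_of_all _ fun _ => (Real.exp_pos _).le), hlaplace, Phi]

lemma lintegral_exp_X {u t : ℝ} (hu : 0 < u) (ht : 0 ≤ t) :
    ∫⁻ ω, ENNReal.ofReal (Real.exp (-(u * (S.X0 ω + S.Xp t ω))))
      = ENNReal.ofReal (S.Phi u / (S.μ * u) * Real.exp (-(t * S.Phi u))) := by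
  have hindep : IndepFun (fun ω => ENNReal.ofReal (Real.exp (-(u * S.X0 ω))))
      (fun ω => ENNReal.ofReal (Real.exp (-(u * S.Xp t ω)))) ℙ :=
    (S.X0_indep.comp measurable_id (measurable_pi_apply t)).comp
      (φ := fun x => ENNReal.ofReal (Real.exp (-(u * x))))
      (ψ := fun x => ENNReal.ofReal (Real.exp (-(u * x)))) (by fun_prop) (by fun_prop)
  calc ∫⁻ ω, ENNReal.ofReal (Real.exp (-(u * (S.X0 ω + S.Xp t ω))))
      = ∫⁻ ω, ((fun ω => ENNReal.ofReal (Real.exp (-(u * S.X0 ω))))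
          * fun ω => ENNReal.ofReal (Real.exp (-(u * S.Xp t ω)))) ω := by
        refine lintegral_congr fun ω => ?_
        rw [Pi.mul_apply, ← ENNReal.ofReal_mul (Real.exp_pos _).le, ← Real.exp_add, mul_add,
          neg_add]
    _ = ENNReal.ofReal (S.Phi u / (S.μ * u) * Real.exp (-(t * S.Phi u))) := by
        have := S.X0_meas
        have := S.Xp_meas t
        rw [lintegral_mul_eq_lintegral_mul_lintegral_of_indepFun (by fun_prop) (by fun_prop)
          hindep, S.lintegral_exp_X0 hu, S.lintegral_exp_Xp hu.le ht,
          ENNReal.ofReal_mul (div_nonneg (S.Phi_nonneg hu.le) (mul_pos S.mu_pos hu).le)]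

section PassageTime

def IsRegularPath (ω : Ω) : Prop :=
  Monotone (fun t => S.Xp t ω) ∧ (∀ t, ContinuousWithinAt (fun s => S.Xp s ω) (Ici t) t) ∧
    Tendsto (fun t => S.Xp t ω) atTop atTop ∧ 0 < S.X0 ω

lemma ae_isRegularPath : ∀ᵐ ω, S.IsRegularPath ω := by
  filter_upwards [S.Xp_mono, S.Xp_rc, S.Xp_top, S.X0_pos] with ω h₁ h₂ h₃ h₄
  exact ⟨h₁, h₂, h₃, h₄⟩

variable {S}

lemma IsRegularPath.X_nonneg {ω : Ω} (hω : S.IsRegularPath ω) {t : ℝ} (ht : 0 ≤ t) :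
    0 ≤ S.X0 ω + S.Xp t ω := by
  have := hω.1 ht
  simp only [S.Xp_zero] at this
  linarith [hω.2.2.2]

lemma IsRegularPath.passage_nonempty {ω : Ω} (hω : S.IsRegularPath ω) (x : ℝ) :
    {t : ℝ | 0 ≤ t ∧ x < S.X0 ω + S.Xp t ω}.Nonempty := by
  obtain ⟨t, hxt, ht⟩ :=
    ((hω.2.2.1.eventually_gt_atTop (x - S.X0 ω)).and (eventually_ge_atTop 0)).exists
  exact ⟨t, ht, by linarith⟩

variable (S) in
lemma T_nonneg (x : ℝ) (ω : Ω) : 0 ≤ S.T x ω :=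
  Real.sInf_nonneg fun _ ht => ht.1

lemma T_le {x t : ℝ} {ω : Ω} (ht : 0 ≤ t) (hx : x < S.X0 ω + S.Xp t ω) : S.T x ω ≤ t :=
  csInf_le ⟨0, fun _ hs => hs.1⟩ ⟨ht, hx⟩

lemma X_le_of_lt_T {x t : ℝ} {ω : Ω} (ht : 0 ≤ t) (h : t < S.T x ω) :
    S.X0 ω + S.Xp t ω ≤ x := by
  by_contra! hx
  exact (T_le ht hx).not_gt h

lemma IsRegularPath.lt_T_of_X_lt {ω : Ω} (hω : S.IsRegularPath ω) {x t : ℝ}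
    (hx : S.X0 ω + S.Xp t ω < x) : t < S.T x ω := by
  -- by right-continuity `X` stays below `x` on some `[t, v)`, so `v ≤ T_x`
  obtain ⟨v, htv, hv⟩ := mem_nhdsGE_iff_exists_Ico_subset.1
    ((hω.2.1 t) (Iio_mem_nhds (show S.Xp t ω < x - S.X0 ω by linarith)))
  refine htv.trans_le (le_csInf (hω.passage_nonempty x) fun b hb => ?_)
  by_contra! hbv
  rcases le_or_gt b t with hbt | htb
  · linarith [hω.1 hbt, hb.2]
  · linarith [show S.Xp b ω < x - S.X0 ω from hv ⟨htb.le, hbv⟩, hb.2]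

lemma IsRegularPath.T_le_iff {ω : Ω} (hω : S.IsRegularPath ω) {x c : ℝ} (hc : 0 ≤ c) :
    S.T x ω ≤ c ↔ ∀ q : ℚ, c < q → x < S.X0 ω + S.Xp q ω := by
  constructor
  · intro h q hq
    obtain ⟨a, ha, haq⟩ := exists_lt_of_csInf_lt (hω.passage_nonempty x) (h.trans_lt hq)
    linarith [hω.1 haq.le, ha.2]
  · intro h
    refine le_of_forall_pos_le_add fun ε hε => ?_
    obtain ⟨q, hcq, hqε⟩ := exists_rat_btwn (lt_add_of_pos_right c hε)
    exact (T_le (hc.trans hcq.le) (h q hcq)).trans hqε.le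

end PassageTime

def regularSet : Set Ω := (toMeasurable ℙ {ω | ¬ S.IsRegularPath ω})ᶜ

lemma measurableSet_regularSet : MeasurableSet S.regularSet :=
  (measurableSet_toMeasurable _ _).compl

lemma ae_mem_regularSet : ∀ᵐ ω, ω ∈ S.regularSet := by
  rw [ae_iff]
  simpa [regularSet, measure_toMeasurable] using ae_iff.1 S.ae_isRegularPath

lemma isRegularPath_of_mem_regularSet {ω : Ω} (hω : ω ∈ S.regularSet) : S.IsRegularPath ω := by
  by_contra h
  exact hω (subset_toMeasurable _ _ h)

/-- Unlike `T`, this is jointly measurable in `(x, ω)`. -/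
def Treg (x : ℝ) (ω : Ω) : ℝ := S.regularSet.indicator (S.T x) ω

lemma Treg_nonneg (x : ℝ) (ω : Ω) : 0 ≤ S.Treg x ω :=
  Set.indicator_nonneg (fun ω _ => S.T_nonneg x ω) ω

lemma Treg_eq_T {ω : Ω} (hω : ω ∈ S.regularSet) (x : ℝ) : S.Treg x ω = S.T x ω :=
  Set.indicator_of_mem hω _

lemma Treg_le_iff {x c : ℝ} (hc : 0 ≤ c) (ω : Ω) :
    S.Treg x ω ≤ c ↔ (ω ∈ S.regularSet → ∀ q : ℚ, c < q → x < S.X0 ω + S.Xp q ω) := by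
  by_cases hω : ω ∈ S.regularSet
  · rw [S.Treg_eq_T hω, (S.isRegularPath_of_mem_regularSet hω).T_le_iff hc]
    exact ⟨fun h _ => h, fun h => h hω⟩
  · simp [Treg, hω, hc]

lemma measurable_Treg : Measurable (Function.uncurry S.Treg) := by
  refine measurable_of_Iic fun c => ?_
  rcases lt_or_ge c 0 with hc | hc
  · convert MeasurableSet.empty
    exact eq_empty_of_forall_notMem fun p hp => hc.not_ge ((S.Treg_nonneg p.1 p.2).trans hp)
  · have hX (q : ℚ) : Measurable fun ω => S.X0 ω + S.Xp q ω := S.X0_meas.add (S.Xp_meas q)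
    have hset : Function.uncurry S.Treg ⁻¹' Iic c = {p : ℝ × Ω | p.2 ∈ S.regularSet →
        ∀ q : ℚ, c < q → p.1 < S.X0 p.2 + S.Xp q p.2} := by
      ext p
      exact S.Treg_le_iff hc p.2
    rw [hset]
    exact measurableSet_setOfPred.2 <|
      (measurableSet_setOfPred.1 (S.measurableSet_regularSet.preimage measurable_snd)).imp <|
        Measurable.forall fun q => measurable_const.imp <| measurableSet_setOfPred.1 <|
          measurableSet_lt measurable_fst ((hX q).comp measurable_snd)

lemma lintegral_exp_mul_indicator_lt_Treg {u t : ℝ} (hu : 0 < u) (ht : 0 ≤ t) {ω : Ω}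
    (hω : ω ∈ S.regularSet) :
    ∫⁻ x in Ioi 0, ENNReal.ofReal (u * Real.exp (-(u * x))) * (Iio (S.Treg x ω)).indicator 1 t
      = ENNReal.ofReal (Real.exp (-(u * (S.X0 ω + S.Xp t ω)))) := by
  have hreg := S.isRegularPath_of_mem_regularSet hω
  have hind (x : ℝ) : (Iio (S.Treg x ω)).indicator (1 : ℝ → ℝ≥0∞) t
      = {x | t < S.T x ω}.indicator 1 x := by
    simp [Set.indicator_apply, S.Treg_eq_T hω]
  simp only [hind]
  exact lintegral_Ioi_zero_mul_exp_neg_mul_indicator hu (hreg.X_nonneg ht)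
    (fun _ hx => hreg.lt_T_of_X_lt hx) (fun _ hx => X_le_of_lt_T ht hx)

def meanExpIntegral (θ x : ℝ) : ℝ≥0∞ :=
  ∫⁻ ω, ENNReal.ofReal (∫ t in (0:ℝ)..S.Treg x ω, Real.exp (θ * t))

lemma measurable_integral_exp_Treg (θ : ℝ) :
    Measurable fun p : ℝ × Ω => ∫ t in (0:ℝ)..S.Treg p.1 p.2, Real.exp (θ * t) :=
  (intervalIntegral.continuous_primitive
    (fun _ _ => (by fun_prop : Continuous fun t => Real.exp (θ * t)).intervalIntegrable _ _)
    0).measurable.comp S.measurable_Treg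

lemma measurable_meanExpIntegral (θ : ℝ) : Measurable (S.meanExpIntegral θ) :=
  have := S.prob
  ((S.measurable_integral_exp_Treg θ).ennreal_ofReal).lintegral_prod_right'

lemma measurable_mul_meanExpIntegral (u θ : ℝ) :
    Measurable fun x => ENNReal.ofReal (u * Real.exp (-(u * x))) * S.meanExpIntegral θ x :=
  (by fun_prop : Measurable _).mul (S.measurable_meanExpIntegral θ)

lemma lintegral_mul_meanExpIntegral {u θ : ℝ} (hu : 0 < u) (hθ : θ < S.Phi u) :
    ∫⁻ x in Ioi 0, ENNReal.ofReal (u * Real.exp (-(u * x))) * S.meanExpIntegral θ x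
      = ENNReal.ofReal (S.Phi u / (S.μ * u) / (S.Phi u - θ)) := by
  have := S.prob
  set c := S.Phi u / (S.μ * u)
  have hc : 0 ≤ c := div_nonneg (S.Phi_nonneg hu.le) (mul_pos S.mu_pos hu).le
  have hΦθ : 0 < S.Phi u - θ := sub_pos.2 hθ
  have hmeas : Measurable fun p : ℝ × Ω × ℝ => ENNReal.ofReal (u * Real.exp (-(u * p.1)))
      * (ENNReal.ofReal (Real.exp (θ * p.2.2)) * (Iio (S.Treg p.1 p.2.1)).indicator 1 p.2.2) :=
    (by fun_prop : Measurable _).mul ((by fun_prop : Measurable _).mul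
      (measurable_const.indicator (measurableSet_lt measurable_snd.snd
        (S.measurable_Treg.comp (measurable_fst.prodMk measurable_snd.fst)))))
  calc ∫⁻ x in Ioi 0, ENNReal.ofReal (u * Real.exp (-(u * x))) * S.meanExpIntegral θ x
      = ∫⁻ x in Ioi 0, ∫⁻ ω, ∫⁻ t in Ioi 0, ENNReal.ofReal (u * Real.exp (-(u * x)))
          * (ENNReal.ofReal (Real.exp (θ * t)) * (Iio (S.Treg x ω)).indicator 1 t) := by
        refine lintegral_congr fun x => ?_
        rw [meanExpIntegral, ← lintegral_const_mul' _ _ ENNReal.ofReal_ne_top]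
        refine lintegral_congr fun ω => ?_
        rw [ofReal_integral_exp_mul_eq_lintegral θ (S.Treg_nonneg x ω),
          lintegral_const_mul' _ _ ENNReal.ofReal_ne_top]
    _ = ∫⁻ t in Ioi 0, ∫⁻ ω, ∫⁻ x in Ioi 0, ENNReal.ofReal (u * Real.exp (-(u * x)))
          * (ENNReal.ofReal (Real.exp (θ * t)) * (Iio (S.Treg x ω)).indicator 1 t) :=
        lintegral_lintegral_lintegral_comm hmeas
    _ = ∫⁻ t in Ioi 0, ENNReal.ofReal (Real.exp (θ * t))
          * ENNReal.ofReal (c * Real.exp (-(t * S.Phi u))) := by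
        refine setLIntegral_congr_fun measurableSet_Ioi fun t ht => ?_
        rw [← S.lintegral_exp_X hu ht.le, ← lintegral_const_mul' _ _ ENNReal.ofReal_ne_top]
        refine lintegral_congr_ae (S.ae_mem_regularSet.mono fun ω hω => ?_)
        dsimp only
        rw [← S.lintegral_exp_mul_indicator_lt_Treg hu ht.le hω,
          ← lintegral_const_mul' _ _ ENNReal.ofReal_ne_top]
        congr with x
        ring
    _ = ∫⁻ t in Ioi 0, ENNReal.ofReal (c / (S.Phi u - θ))
          * ENNReal.ofReal ((S.Phi u - θ) * Real.exp (-((S.Phi u - θ) * t))) := by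
        refine lintegral_congr fun t => ?_
        rw [← ENNReal.ofReal_mul (Real.exp_pos _).le, ← ENNReal.ofReal_mul (by positivity)]
        rw [show -((S.Phi u - θ) * t) = θ * t + -(t * S.Phi u) by ring, Real.exp_add]
        field_simp
    _ = ENNReal.ofReal (c / (S.Phi u - θ)) := by
        rw [lintegral_const_mul _ (by fun_prop), lintegral_Ioi_mul_exp_neg_mul hΦθ, mul_zero,
          neg_zero, Real.exp_zero, ENNReal.ofReal_one, mul_one]

lemma integral_exp_T {θ x : ℝ} (hfin : S.meanExpIntegral θ x ≠ ⊤) :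
    ∫ ω, Real.exp (θ * S.T x ω) = 1 + θ * (S.meanExpIntegral θ x).toReal := by
  have := S.prob
  have hF_nonneg (ω : Ω) : 0 ≤ ∫ t in (0:ℝ)..S.Treg x ω, Real.exp (θ * t) :=
    intervalIntegral.integral_nonneg (S.Treg_nonneg x ω) fun t _ => (Real.exp_pos _).le
  have hF_meas : Measurable fun ω => ∫ t in (0:ℝ)..S.Treg x ω, Real.exp (θ * t) :=
    ((S.measurable_integral_exp_Treg θ).comp (measurable_prodMk_left (x := x)) :)
  have hF_int : Integrable fun ω => ∫ t in (0:ℝ)..S.Treg x ω, Real.exp (θ * t) :=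
    ⟨hF_meas.aestronglyMeasurable, by
      rw [hasFiniteIntegral_iff_ofReal (ae_of_all _ hF_nonneg)]
      exact hfin.lt_top⟩
  calc ∫ ω, Real.exp (θ * S.T x ω)
      = ∫ ω, 1 + θ * ∫ t in (0:ℝ)..S.Treg x ω, Real.exp (θ * t) :=
        integral_congr_ae (S.ae_mem_regularSet.mono fun ω hω => by
          dsimp only
          rw [mul_integral_exp_mul, S.Treg_eq_T hω]
          ring)
    _ = 1 + θ * (S.meanExpIntegral θ x).toReal := by
        rw [integral_add (integrable_const 1) (hF_int.const_mul θ), integral_const_mul,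
          integral_eq_lintegral_of_nonneg_ae (ae_of_all _ hF_nonneg)
            hF_meas.aestronglyMeasurable]
        simp [meanExpIntegral]

lemma ae_meanExpIntegral_ne_top {u θ : ℝ} (hu : 0 < u) (hθ : θ < S.Phi u) :
    ∀ᵐ x ∂volume.restrict (Ioi 0), S.meanExpIntegral θ x ≠ ⊤ := by
  filter_upwards [ae_lt_top (S.measurable_mul_meanExpIntegral u θ)
    (S.lintegral_mul_meanExpIntegral hu hθ ▸ ENNReal.ofReal_ne_top)]
    with x hx htop
  rw [htop, ENNReal.mul_top (by simp; positivity)] at hx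
  exact lt_irrefl _ hx

end LevyCtx

/-- Double transform of the first passage time:
`∫_0^∞ u e^{-ux} E(e^{θ T_x}) dx = 1 + (θ/(Φ(u) - θ)) Φ(u)/(μu)`. -/
theorem double_transform_T {Ω : Type} [MeasureSpace Ω] (S : LevyCtx Ω)
    (u θ : ℝ) (hu : 0 < u) (hθ : θ < S.Phi u) :
    (∫ x in Set.Ioi (0:ℝ), u * Real.exp (-(u * x)) * ∫ ω, Real.exp (θ * S.T x ω))
      = 1 + (θ / (S.Phi u - θ)) * (S.Phi u / (S.μ * u)) := by
  have hmeas := S.measurable_mul_meanExpIntegral u θ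
  have htransform := S.lintegral_mul_meanExpIntegral hu hθ
  have hfin : ∫⁻ x in Ioi 0, ENNReal.ofReal (u * Real.exp (-(u * x))) * S.meanExpIntegral θ x
      ≠ ⊤ := htransform ▸ ENNReal.ofReal_ne_top
  calc (∫ x in Ioi 0, u * Real.exp (-(u * x)) * ∫ ω, Real.exp (θ * S.T x ω))
      = ∫ x in Ioi 0, u * Real.exp (-(u * x))
          + θ * (ENNReal.ofReal (u * Real.exp (-(u * x))) * S.meanExpIntegral θ x).toReal :=
        integral_congr_ae <| (S.ae_meanExpIntegral_ne_top hu hθ).mono fun x hx => by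
          simp only [S.integral_exp_T hx, ENNReal.toReal_mul, ENNReal.toReal_ofReal
            (mul_pos hu (Real.exp_pos _)).le]
          ring
    _ = 1 + θ * (S.Phi u / (S.μ * u) / (S.Phi u - θ)) := by
        rw [integral_add (integrableOn_Ioi_mul_exp_neg_mul hu 0)
            ((integrable_toReal_of_lintegral_ne_top hmeas.aemeasurable hfin).const_mul θ),
          integral_const_mul (μ := volume.restrict (Ioi 0)) θ,
          integral_toReal hmeas.aemeasurable (ae_lt_top hmeas hfin), htransform,
          integral_Ioi_mul_exp_neg_mul hu, mul_zero, neg_zero, Real.exp_zero,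
          ENNReal.toReal_ofReal (div_nonneg (div_nonneg (S.Phi_nonneg hu.le)
            (mul_pos S.mu_pos hu).le) (sub_pos.2 hθ).le)]
    _ = 1 + (θ / (S.Phi u - θ)) * (S.Phi u / (S.μ * u)) := by ring
end
end

section
/- For every u > 0 and every real θ with −μu < θ and θ < Φ(u + θ/μ), ∫_0^∞ u e^{−ux} E(e^{θ(T̃_x − x/μ)} − 1) dx = (θ/(μu + θ)) · [ μu/(Φ(u + θ/μ) − θ) − 1 ]. -/
/-!
With `v = u + θ/μ`, the centering factor `e^{-θx/μ}` turns `e^{-ux}` into `e^{-vx}`, so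
everything reduces to `∫_0^∞ e^{-vx} E[(e^{θT̃_x} - 1)/θ] dx`. Write
`(e^{θT̃_x} - 1)/θ = ∫_0^∞ e^{θt} 1{t < T̃_x} dt` and note that `{x : t < T̃_x}` is `(X̃_t, ∞)`
up to its endpoint. Tonelli then gives
`∫_0^∞ e^{θt} E[∫_{X̃_t}^∞ e^{-vx} dx] dt = (1/v) ∫_0^∞ e^{θt} e^{-tΦ(v)} dt = 1/(v(Φ(v) - θ))`,
finite because `θ < Φ(v)`; this finiteness is also what makes the inner expectations integrable
for almost every `x`.
-/

open MeasureTheory ProbabilityTheory Filter Set Topology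

noncomputable section

open scoped ENNReal

lemma lintegral_exp_mul_Ioi {a : ℝ} (ha : a < 0) (c : ℝ) :
    ∫⁻ x in Ioi c, ENNReal.ofReal (Real.exp (a * x))
      = ENNReal.ofReal (-Real.exp (a * c) / a) := by
  rw [← integral_exp_mul_Ioi ha, ofReal_integral_eq_lintegral_ofReal
    (integrableOn_exp_mul_Ioi ha c) (ae_of_all _ fun _ => (Real.exp_pos _).le)]

lemma lintegral_exp_mul_Ioo {θ T : ℝ} (hθ : θ ≠ 0) (hT : 0 ≤ T) :
    ∫⁻ t in Ioo 0 T, ENNReal.ofReal (Real.exp (θ * t))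
      = ENNReal.ofReal ((Real.exp (θ * T) - 1) / θ) := by
  have hint : IntegrableOn (fun t => Real.exp (θ * t)) (Ioo 0 T) :=
    (by fun_prop : Continuous fun t => Real.exp (θ * t)).integrableOn_Icc.mono_set
      Ioo_subset_Icc_self
  rw [← ofReal_integral_eq_lintegral_ofReal hint (ae_of_all _ fun _ => (Real.exp_pos _).le),
    ← integral_Ioc_eq_integral_Ioo, ← intervalIntegral.integral_of_le hT,
    intervalIntegral.integral_comp_mul_left (fun t => Real.exp t) hθ, integral_exp]
  simp [div_eq_inv_mul]

lemma exp_mul_sub_one_div_nonneg {θ T : ℝ} (hθ : θ ≠ 0) (hT : 0 ≤ T) :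
    0 ≤ (Real.exp (θ * T) - 1) / θ := by
  rcases hθ.lt_or_gt with hneg | hpos
  · exact div_nonneg_of_nonpos
      (sub_nonpos.2 (Real.exp_le_one_iff.2 (mul_nonpos_of_nonpos_of_nonneg hneg.le hT))) hneg.le
  · exact div_nonneg (sub_nonneg.2 (Real.one_le_exp (mul_nonneg hpos.le hT))) hpos.le

section FirstPassage

variable {f : ℝ → ℝ} {x t : ℝ}

/-- The times before the first passage of a monotone path `f` strictly above `x`, described
through rational times so that the set is measurable in the path. -/
def beforePassage (f : ℝ → ℝ) (x : ℝ) : Set ℝ := {t | ∃ q : ℚ, t < q ∧ f q ≤ x}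

lemma lt_sInf_passage_iff_mem_beforePassage (hf : Monotone f) (htop : Tendsto f atTop atTop)
    (ht : 0 ≤ t) : t < sInf {s | 0 ≤ s ∧ x < f s} ↔ t ∈ beforePassage f x := by
  have hne : {s | 0 ≤ s ∧ x < f s}.Nonempty :=
    ((htop.eventually_gt_atTop x).and (eventually_ge_atTop 0)).exists.imp fun _ h => ⟨h.2, h.1⟩
  have hbdd : BddBelow {s | 0 ≤ s ∧ x < f s} := ⟨0, fun _ hs => hs.1⟩
  constructor
  · intro hlt
    obtain ⟨q, htq, hq⟩ := exists_rat_btwn hlt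
    exact ⟨q, htq, not_lt.1 fun hxq => (csInf_le hbdd ⟨ht.trans htq.le, hxq⟩).not_gt hq⟩
  · rintro ⟨q, htq, hq⟩
    refine htq.trans_le (le_csInf hne fun s ⟨_, hxs⟩ => ?_)
    by_contra! hsq
    exact (hf hsq.le).trans hq |>.not_gt hxs

lemma mem_beforePassage_of_lt (hrc : ContinuousWithinAt f (Ici t) t) (hlt : f t < x) :
    t ∈ beforePassage f x := by
  obtain ⟨s, hts, hs⟩ := mem_nhdsGE_iff_exists_Ico_subset.1 (hrc (Iio_mem_nhds hlt))
  obtain ⟨q, htq, hqs⟩ := exists_rat_btwn (mem_Ioi.1 hts)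
  exact ⟨q, htq, (hs ⟨htq.le, hqs⟩).le⟩

lemma lintegral_time_exp_mul_indicator_beforePassage (hf : Monotone f)
    (htop : Tendsto f atTop atTop) {θ : ℝ} (hθ : θ ≠ 0) :
    ∫⁻ t in Ioi 0, ENNReal.ofReal (Real.exp (θ * t)) * (beforePassage f x).indicator 1 t
      = ENNReal.ofReal ((Real.exp (θ * sInf {s | 0 ≤ s ∧ x < f s}) - 1) / θ) := by
  set τ := sInf {s | 0 ≤ s ∧ x < f s}
  have hτ : 0 ≤ τ := Real.sInf_nonneg fun _ hs => hs.1
  have hcongr : EqOn (fun t => ENNReal.ofReal (Real.exp (θ * t)) *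
      (beforePassage f x).indicator 1 t)
      ((Iio τ).indicator fun t => ENNReal.ofReal (Real.exp (θ * t))) (Ioi 0) := by
    intro t ht
    have hiff : t < τ ↔ t ∈ beforePassage f x :=
      lt_sInf_passage_iff_mem_beforePassage hf htop ht.le
    by_cases h : t < τ
    · simp [indicator_of_mem (mem_Iio.2 h), indicator_of_mem (hiff.1 h)]
    · simp [indicator_of_notMem (mt mem_Iio.1 h), indicator_of_notMem (mt hiff.2 h)]
  rw [setLIntegral_congr_fun measurableSet_Ioi hcongr, lintegral_indicator measurableSet_Iio,
    Measure.restrict_restrict measurableSet_Iio, Iio_inter_Ioi, lintegral_exp_mul_Ioo hθ hτ]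

lemma lintegral_level_exp_mul_indicator_beforePassage (hf : Monotone f)
    (hrc : ContinuousWithinAt f (Ici t) t) (hft : 0 ≤ f t) {a : ℝ} (ha : a < 0) :
    ∫⁻ x in Ioi 0, ENNReal.ofReal (Real.exp (a * x)) * (beforePassage f x).indicator 1 t
      = ENNReal.ofReal (-Real.exp (a * f t) / a) := by
  have hcongr : (fun x => ENNReal.ofReal (Real.exp (a * x)) * (beforePassage f x).indicator 1 t)
      =ᵐ[volume.restrict (Ioi 0)]
        (Ioi (f t)).indicator fun x => ENNReal.ofReal (Real.exp (a * x)) := by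
    refine ae_restrict_of_ae ((Measure.ae_ne volume (f t)).mono fun x hne => ?_)
    by_cases h : f t < x
    · simp [indicator_of_mem (mem_Ioi.2 h),
        indicator_of_mem (mem_beforePassage_of_lt hrc h)]
    · have hmem : t ∉ beforePassage f x := fun ⟨q, htq, hq⟩ =>
        h ((hf htq.le).trans hq |>.lt_of_ne hne.symm)
      simp [indicator_of_notMem (mt mem_Ioi.1 h), indicator_of_notMem hmem]
  rw [lintegral_congr_ae hcongr, lintegral_indicator measurableSet_Ioi,
    Measure.restrict_restrict measurableSet_Ioi, Ioi_inter_Ioi, sup_eq_left.2 hft,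
    lintegral_exp_mul_Ioi ha]

end FirstPassage

namespace LevyCtx

variable {Ω : Type} [MeasureSpace Ω] (S : LevyCtx Ω)

lemma ae_regular_path : ∀ᵐ ω, Monotone (fun t => S.Xp t ω) ∧
    (∀ t, ContinuousWithinAt (fun s => S.Xp s ω) (Ici t) t) ∧
    Tendsto (fun t => S.Xp t ω) atTop atTop :=
  S.Xp_mono.and (S.Xp_rc.and S.Xp_top)

lemma ae_Xp_nonneg {t : ℝ} (ht : 0 ≤ t) : ∀ᵐ ω, 0 ≤ S.Xp t ω :=
  S.Xp_mono.mono fun ω hω => S.Xp_zero ω ▸ hω ht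

lemma lintegral_exp_mul_Xp {v t : ℝ} (hv : 0 ≤ v) (ht : 0 ≤ t) :
    ∫⁻ ω, ENNReal.ofReal (Real.exp (-v * S.Xp t ω))
      = ENNReal.ofReal (Real.exp (-(t * S.Phi v))) := by
  have := S.prob
  have hbound : ∀ᵐ ω, ‖Real.exp (-v * S.Xp t ω)‖ ≤ 1 := by
    filter_upwards [S.ae_Xp_nonneg ht] with ω hω
    rw [Real.norm_of_nonneg (Real.exp_pos _).le, Real.exp_le_one_iff]
    nlinarith
  have hint : Integrable (fun ω => Real.exp (-v * S.Xp t ω)) :=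
    (integrable_const 1).mono'
      (Real.measurable_exp.comp ((S.Xp_meas t).const_mul (-v))).aestronglyMeasurable hbound
  rw [← ofReal_integral_eq_lintegral_ofReal hint (ae_of_all _ fun _ => (Real.exp_pos _).le)]
  simp_rw [neg_mul]
  rw [S.Xp_laplace v hv t ht, Phi]

lemma Tp_nonneg (x : ℝ) (ω : Ω) : 0 ≤ S.Tp x ω :=
  Real.sInf_nonneg fun _ h => h.1

lemma measurable_indicator_beforePassage :
    Measurable fun p : (ℝ × ℝ) × Ω =>
      (beforePassage (fun s => S.Xp s p.2) p.1.1).indicator (1 : ℝ → ℝ≥0∞) p.1.2 := by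
  have hunion : {p : (ℝ × ℝ) × Ω | p.1.2 ∈ beforePassage (fun s => S.Xp s p.2) p.1.1}
      = ⋃ q : ℚ, {p | p.1.2 < (q : ℝ)} ∩ {p | S.Xp q p.2 ≤ p.1.1} := by
    ext
    simp [beforePassage]
  have hset : MeasurableSet (⋃ q : ℚ, {p : (ℝ × ℝ) × Ω | p.1.2 < (q : ℝ)}
      ∩ {p | S.Xp q p.2 ≤ p.1.1}) :=
    .iUnion fun q => (measurableSet_lt (by fun_prop) measurable_const).inter
      (measurableSet_le ((S.Xp_meas q).comp measurable_snd) (by fun_prop))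
  rw [← hunion] at hset
  exact measurable_one.indicator hset

/-- `E ∫_0^{T̃_x} e^{θt} dt`, written through `beforePassage` so that it is measurable
in `x`. -/
def expIntegralBeforePassage (θ x : ℝ) : ℝ≥0∞ :=
  ∫⁻ ω, ∫⁻ t in Ioi 0,
    ENNReal.ofReal (Real.exp (θ * t)) * (beforePassage (fun s => S.Xp s ω) x).indicator 1 t

lemma measurable_lintegral_exp_mul_indicator_beforePassage (θ : ℝ) :
    Measurable fun p : ℝ × Ω => ∫⁻ t in Ioi 0, ENNReal.ofReal (Real.exp (θ * t)) *
      (beforePassage (fun s => S.Xp s p.2) p.1).indicator 1 t :=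
  Measurable.lintegral_prod_right' (f := fun q : (ℝ × Ω) × ℝ =>
      ENNReal.ofReal (Real.exp (θ * q.2)) *
        (beforePassage (fun s => S.Xp s q.1.2) q.1.1).indicator 1 q.2)
    ((by fun_prop : Measurable fun q : (ℝ × Ω) × ℝ =>
        ENNReal.ofReal (Real.exp (θ * q.2))).mul
      (S.measurable_indicator_beforePassage.comp
        (f := fun q : (ℝ × Ω) × ℝ => ((q.1.1, q.2), q.1.2)) (by fun_prop)))

@[fun_prop]
lemma measurable_expIntegralBeforePassage (θ : ℝ) :
    Measurable (S.expIntegralBeforePassage θ) := by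
  have := S.prob
  exact (S.measurable_lintegral_exp_mul_indicator_beforePassage θ).lintegral_prod_right'

lemma ae_lintegral_exp_mul_indicator_beforePassage {θ : ℝ} (hθ : θ ≠ 0) (x : ℝ) :
    ∀ᵐ ω, ∫⁻ t in Ioi 0,
        ENNReal.ofReal (Real.exp (θ * t)) * (beforePassage (fun s => S.Xp s ω) x).indicator 1 t
      = ENNReal.ofReal ((Real.exp (θ * S.Tp x ω) - 1) / θ) :=
  S.ae_regular_path.mono fun _ hω =>
    lintegral_time_exp_mul_indicator_beforePassage hω.1 hω.2.2 hθ

lemma lintegral_exp_mul_expIntegralBeforePassage {v θ : ℝ} (hv : 0 < v) (hθ : θ < S.Phi v) :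
    ∫⁻ x in Ioi 0, ENNReal.ofReal (Real.exp (-v * x)) * S.expIntegralBeforePassage θ x
      = ENNReal.ofReal (1 / (v * (S.Phi v - θ))) := by
  have := S.prob
  set ind := fun (x t : ℝ) (ω : Ω) =>
    (beforePassage (fun s => S.Xp s ω) x).indicator (1 : ℝ → ℝ≥0∞) t
  set F := fun (x t : ℝ) (ω : Ω) =>
    ENNReal.ofReal (Real.exp (θ * t)) * (ENNReal.ofReal (Real.exp (-v * x)) * ind x t ω)
  have hF : Measurable fun p : (ℝ × ℝ) × Ω => F p.1.1 p.1.2 p.2 :=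
    (by fun_prop : Measurable fun p : (ℝ × ℝ) × Ω =>
      ENNReal.ofReal (Real.exp (θ * p.1.2))).mul
      ((by fun_prop : Measurable fun p : (ℝ × ℝ) × Ω =>
        ENNReal.ofReal (Real.exp (-v * p.1.1))).mul S.measurable_indicator_beforePassage)
  have hfactor (x : ℝ) : ENNReal.ofReal (Real.exp (-v * x)) * S.expIntegralBeforePassage θ x
      = ∫⁻ ω, ∫⁻ t in Ioi 0, F x t ω := by
    rw [expIntegralBeforePassage, ← lintegral_const_mul' _ _ ENNReal.ofReal_ne_top]
    refine lintegral_congr fun ω => ?_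
    rw [← lintegral_const_mul' _ _ ENNReal.ofReal_ne_top]
    exact lintegral_congr fun t => mul_left_comm _ _ _
  have hsection : ∀ t ∈ Ioi (0 : ℝ), ∫⁻ ω, ∫⁻ x in Ioi 0, F x t ω
      = ENNReal.ofReal (1 / v) * ENNReal.ofReal (Real.exp ((θ - S.Phi v) * t)) := by
    intro t ht
    have hx : ∀ᵐ ω, ∫⁻ x in Ioi 0, F x t ω = ENNReal.ofReal (Real.exp (θ * t)) *
        (ENNReal.ofReal (1 / v) * ENNReal.ofReal (Real.exp (-v * S.Xp t ω))) := by
      filter_upwards [S.ae_regular_path, S.ae_Xp_nonneg (le_of_lt ht)] with ω hω hXt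
      rw [lintegral_const_mul' _ _ ENNReal.ofReal_ne_top,
        lintegral_level_exp_mul_indicator_beforePassage hω.1 (hω.2.1 t) hXt (neg_neg_of_pos hv),
        ← ENNReal.ofReal_mul (one_div_pos.2 hv).le]
      congr 2
      field_simp
    rw [lintegral_congr_ae hx, lintegral_const_mul' _ _ ENNReal.ofReal_ne_top,
      lintegral_const_mul' _ _ ENNReal.ofReal_ne_top, S.lintegral_exp_mul_Xp hv.le (le_of_lt ht),
      mul_left_comm, ← ENNReal.ofReal_mul (Real.exp_pos _).le, ← Real.exp_add]
    congr 3
    ring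
  calc ∫⁻ x in Ioi 0, ENNReal.ofReal (Real.exp (-v * x)) * S.expIntegralBeforePassage θ x
      = ∫⁻ x in Ioi 0, ∫⁻ ω, ∫⁻ t in Ioi 0, F x t ω := lintegral_congr hfactor
    _ = ∫⁻ x in Ioi 0, ∫⁻ t in Ioi 0, ∫⁻ ω, F x t ω := lintegral_congr fun x =>
        lintegral_lintegral_swap (hF.comp (f := fun p : Ω × ℝ => ((x, p.2), p.1))
          (by fun_prop)).aemeasurable
    _ = ∫⁻ t in Ioi 0, ∫⁻ x in Ioi 0, ∫⁻ ω, F x t ω :=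
        lintegral_lintegral_swap (hF.lintegral_prod_right' (ν := ℙ)).aemeasurable
    _ = ∫⁻ t in Ioi 0, ∫⁻ ω, ∫⁻ x in Ioi 0, F x t ω := lintegral_congr fun t =>
        lintegral_lintegral_swap (hF.comp (f := fun p : ℝ × Ω => ((p.1, t), p.2))
          (by fun_prop)).aemeasurable
    _ = ∫⁻ t in Ioi 0,
          ENNReal.ofReal (1 / v) * ENNReal.ofReal (Real.exp ((θ - S.Phi v) * t)) :=
        setLIntegral_congr_fun measurableSet_Ioi hsection
    _ = ENNReal.ofReal (1 / (v * (S.Phi v - θ))) := by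
        rw [lintegral_const_mul' _ _ ENNReal.ofReal_ne_top, lintegral_exp_mul_Ioi (by linarith),
          ← ENNReal.ofReal_mul (by positivity)]
        congr 1
        have hgap : S.Phi v - θ ≠ 0 := (sub_pos.2 hθ).ne'
        rw [mul_zero, Real.exp_zero, ← neg_sub, div_neg]
        field_simp

lemma ae_expIntegralBeforePassage_ne_top {v θ : ℝ} (hv : 0 < v) (hθ : θ < S.Phi v) :
    ∀ᵐ x ∂volume.restrict (Ioi 0), S.expIntegralBeforePassage θ x ≠ ∞ := by
  have hfin := S.lintegral_exp_mul_expIntegralBeforePassage hv hθ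
  filter_upwards [ae_lt_top (by fun_prop) (hfin ▸ ENNReal.ofReal_ne_top)] with x hx htop
  exact hx.ne (by simp [htop, Real.exp_pos])

lemma integrableOn_and_integral_exp_mul_toReal_expIntegralBeforePassage {v θ : ℝ} (hv : 0 < v)
    (hθ : θ < S.Phi v) :
    IntegrableOn (fun x => Real.exp (-v * x) * (S.expIntegralBeforePassage θ x).toReal) (Ioi 0) ∧
      ∫ x in Ioi 0, Real.exp (-v * x) * (S.expIntegralBeforePassage θ x).toReal
        = 1 / (v * (S.Phi v - θ)) := by
  have hmeas : Measurable fun x =>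
      ENNReal.ofReal (Real.exp (-v * x)) * S.expIntegralBeforePassage θ x := by
    fun_prop
  have hfin := S.lintegral_exp_mul_expIntegralBeforePassage hv hθ
  have htoReal : (fun x => Real.exp (-v * x) * (S.expIntegralBeforePassage θ x).toReal)
      = fun x => (ENNReal.ofReal (Real.exp (-v * x)) * S.expIntegralBeforePassage θ x).toReal := by
    ext x
    rw [ENNReal.toReal_mul, ENNReal.toReal_ofReal (Real.exp_pos _).le]
  rw [htoReal]
  refine ⟨integrable_toReal_of_lintegral_ne_top hmeas.aemeasurable
    (hfin ▸ ENNReal.ofReal_ne_top), ?_⟩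
  rw [integral_toReal hmeas.aemeasurable (ae_lt_top hmeas (hfin ▸ ENNReal.ofReal_ne_top)), hfin,
    ENNReal.toReal_ofReal]
  exact (one_div_pos.2 (mul_pos hv (sub_pos.2 hθ))).le

lemma integrable_and_integral_exp_mul_Tp_sub_one_div {θ x : ℝ} (hθ : θ ≠ 0)
    (hx : S.expIntegralBeforePassage θ x ≠ ∞) :
    Integrable (fun ω => (Real.exp (θ * S.Tp x ω) - 1) / θ) ∧
      ∫ ω, (Real.exp (θ * S.Tp x ω) - 1) / θ = (S.expIntegralBeforePassage θ x).toReal := by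
  set g := fun ω => ∫⁻ t in Ioi 0,
    ENNReal.ofReal (Real.exp (θ * t)) * (beforePassage (fun s => S.Xp s ω) x).indicator 1 t
  have hg : Measurable g :=
    (S.measurable_lintegral_exp_mul_indicator_beforePassage θ).comp measurable_prodMk_left
  have hY : (fun ω => (Real.exp (θ * S.Tp x ω) - 1) / θ) =ᵐ[ℙ] fun ω => (g ω).toReal := by
    filter_upwards [S.ae_lintegral_exp_mul_indicator_beforePassage hθ x] with ω hω
    rw [show g ω = _ from hω,
      ENNReal.toReal_ofReal (exp_mul_sub_one_div_nonneg hθ (S.Tp_nonneg x ω))]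
  refine ⟨(integrable_toReal_of_lintegral_ne_top hg.aemeasurable hx).congr hY.symm, ?_⟩
  rw [integral_congr_ae hY, integral_toReal hg.aemeasurable (ae_lt_top hg hx)]
  rfl

lemma integral_exp_mul_Tp_sub_sub_one {θ x : ℝ} (hθ : θ ≠ 0)
    (hx : S.expIntegralBeforePassage θ x ≠ ∞) (a : ℝ) :
    ∫ ω, (Real.exp (θ * (S.Tp x ω - a)) - 1)
      = θ * Real.exp (-θ * a) * (S.expIntegralBeforePassage θ x).toReal
        + (Real.exp (-θ * a) - 1) := by
  have := S.prob
  obtain ⟨hint, hval⟩ := S.integrable_and_integral_exp_mul_Tp_sub_one_div hθ hx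
  have hsplit : (fun ω => Real.exp (θ * (S.Tp x ω - a)) - 1) = fun ω =>
      θ * Real.exp (-θ * a) * ((Real.exp (θ * S.Tp x ω) - 1) / θ)
        + (Real.exp (-θ * a) - 1) := by
    ext ω
    rw [mul_sub, sub_eq_add_neg (θ * _), Real.exp_add]
    field_simp
    ring_nf
  rw [hsplit, integral_add (hint.const_mul _) (integrable_const _), integral_const_mul, hval]
  simp

lemma double_transform_Tp_sub_div {u θ m : ℝ} (hu : 0 < u) (hv : 0 < u + θ / m) (hθ : θ ≠ 0)
    (hθv : θ < S.Phi (u + θ / m)) :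
    ∫ x in Ioi 0, u * Real.exp (-(u * x)) * ∫ ω, (Real.exp (θ * (S.Tp x ω - x / m)) - 1)
      = θ * u / ((u + θ / m) * (S.Phi (u + θ / m) - θ)) + (u / (u + θ / m) - 1) := by
  set v := u + θ / m with hv_def
  obtain ⟨hint, hval⟩ :=
    S.integrableOn_and_integral_exp_mul_toReal_expIntegralBeforePassage hv hθv
  have hpoint : ∀ᵐ x ∂volume.restrict (Ioi 0),
      u * Real.exp (-(u * x)) * ∫ ω, (Real.exp (θ * (S.Tp x ω - x / m)) - 1)
        = θ * u * (Real.exp (-v * x) * (S.expIntegralBeforePassage θ x).toReal)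
          + (u * Real.exp (-v * x) - u * Real.exp (-u * x)) := by
    filter_upwards [S.ae_expIntegralBeforePassage_ne_top hv hθv] with x hx
    have hexp : Real.exp (-v * x) = Real.exp (-(u * x)) * Real.exp (-θ * (x / m)) := by
      rw [← Real.exp_add, hv_def]
      ring_nf
    rw [S.integral_exp_mul_Tp_sub_sub_one hθ hx, hexp, neg_mul u]
    ring
  have hexp_int (a : ℝ) (ha : 0 < a) : IntegrableOn (fun x => u * Real.exp (-a * x)) (Ioi 0) :=
    (integrableOn_exp_mul_Ioi (neg_neg_of_pos ha) 0).const_mul u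
  rw [integral_congr_ae hpoint, integral_add (hint.const_mul _)
      (by exact (hexp_int v hv).sub (hexp_int u hu)),
    integral_sub (hexp_int v hv) (hexp_int u hu), integral_const_mul, hval, integral_const_mul,
    integral_const_mul, integral_exp_mul_Ioi (neg_neg_of_pos hv),
    integral_exp_mul_Ioi (neg_neg_of_pos hu), mul_zero, mul_zero, Real.exp_zero]
  field_simp

end LevyCtx

/-- Double transform of the centered first passage time of the pure subordinator. -/
theorem double_transform_Tp_centered {Ω : Type} [MeasureSpace Ω] (S : LevyCtx Ω)
    (u θ : ℝ) (hu : 0 < u) (hθl : -(S.μ * u) < θ) (hθu : θ < S.Phi (u + θ / S.μ)) :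
    (∫ x in Set.Ioi (0:ℝ), u * Real.exp (-(u * x)) *
        ∫ ω, (Real.exp (θ * (S.Tp x ω - x / S.μ)) - 1))
      = (θ / (S.μ * u + θ)) * (S.μ * u / (S.Phi (u + θ / S.μ) - θ) - 1) := by
  rcases eq_or_ne θ 0 with rfl | hθ
  · simp
  have hμ := S.mu_pos
  have hv_eq : u + θ / S.μ = (S.μ * u + θ) / S.μ := by field_simp
  have hμuθ : 0 < S.μ * u + θ := by linarith
  rw [S.double_transform_Tp_sub_div hu (hv_eq ▸ by positivity) hθ hθu]
  have hgap : S.Phi (u + θ / S.μ) - θ ≠ 0 := (sub_pos.2 hθu).ne'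
  generalize S.Phi (u + θ / S.μ) = c at hgap ⊢
  have : u * S.μ + θ ≠ 0 := by linarith [mul_comm u S.μ]
  rw [hv_eq]
  field_simp
  ring
end
end

section
/- For every n ≥ 2, all real θ_1, …, θ_n and all 0 = x_0 ≤ x_1 ≤ … ≤ x_n, the explicit functions Ξ_n satisfy the recursion Ξ_n(θ_1,…,θ_n; x_1,…,x_n) − Ξ_1(θ_1+…+θ_n; x_1) = e^{−θ_1 x_1/μ} · ( Ξ_{n−1}(θ_2,…,θ_n; x_2,…,x_n) − Ξ_1(θ_2+…+θ_n; x_1) ). -/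
open MeasureTheory Filter Set Topology

noncomputable section

/-- The explicit limit functions `Ξ_n(θ_1,…,θ_n; x_1,…,x_n)` (with the convention
`x_0 = 0`). -/
noncomputable def XiFun (μ β : ℝ) (n : ℕ) (θ x : ℕ → ℝ) : ℝ :=
  let x' : ℕ → ℝ := fun i => if i = 0 then 0 else x i
  ∑ j ∈ Finset.Icc 1 n,
    Real.exp (-(∑ i ∈ Finset.Icc 1 (j - 1),
        (∑ l ∈ Finset.Icc i n, θ l) * (x' i - x' (i - 1))) / μ) *
      ((1 / μ) * ∫ u in (x' (j - 1))..(x' j),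
        (∑ l ∈ Finset.Icc j n, θ l) *
          Real.exp (-((∑ l ∈ Finset.Icc j n, θ l) * (u - x' (j - 1))) / μ) *
          (β⁻¹ * u ^ (-β)))

/-- The one-point limit function `Ξ_1(θ; x) = (1/(βμ)) ∫_0^x θ e^{-θu/μ} u^{-β} du`. -/
noncomputable def XiOne (μ β θ x : ℝ) : ℝ :=
  (1 / (β * μ)) * ∫ u in (0:ℝ)..x, θ * Real.exp (-(θ * u) / μ) * u ^ (-β)

namespace XiRecAux

lemma sum_split_bot {M : Type*} [AddCommMonoid M] (f : ℕ → M) {m : ℕ} (hm : 1 ≤ m) :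
    ∑ j ∈ Finset.Icc 1 m, f j = f 1 + ∑ j ∈ Finset.Icc 2 m, f j := by
  have h2 : Finset.Icc 2 m = Finset.Ioc 1 m := Finset.Icc_add_one_left_eq_Ioc 1 m
  rw [h2, ← Finset.Ioc_insert_left hm, Finset.sum_insert (by simp)]

lemma sum_shift_idx {M : Type*} [AddCommMonoid M] (f : ℕ → M) (a b : ℕ) :
    ∑ j ∈ Finset.Icc (a + 1) (b + 1), f j = ∑ j ∈ Finset.Icc a b, f (j + 1) := by
  rw [← Finset.map_add_right_Icc, Finset.sum_map]
  rfl

/-- `S_j = θ_j + ⋯ + θ_n`. -/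
noncomputable def Sf (θ : ℕ → ℝ) (n j : ℕ) : ℝ := ∑ l ∈ Finset.Icc j n, θ l

lemma Sf_one (θ : ℕ → ℝ) {n : ℕ} (hn : 1 ≤ n) : Sf θ n 1 = θ 1 + Sf θ n 2 :=
  sum_split_bot θ hn

lemma Sf_shift (θ : ℕ → ℝ) {n : ℕ} (hn : 1 ≤ n) (m : ℕ) :
    Sf (fun i => θ (i + 1)) (n - 1) m = Sf θ n (m + 1) := by
  unfold Sf
  rw [← sum_shift_idx θ m (n - 1)]
  congr 2
  omega

/-- the `j`-th summand of `XiFun` written with abstract `X` -/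
noncomputable def Ff (μ β : ℝ) (n : ℕ) (θ X : ℕ → ℝ) (j : ℕ) : ℝ :=
  Real.exp (-(∑ i ∈ Finset.Icc 1 (j - 1), Sf θ n i * (X i - X (i - 1))) / μ) *
    ((1 / μ) * ∫ u in (X (j - 1))..(X j),
      Sf θ n j * Real.exp (-(Sf θ n j * (u - X (j - 1))) / μ) * (β⁻¹ * u ^ (-β)))

/-- the `j`-th summand of the shifted `XiFun`, expressed via the original `Sf θ n` -/
noncomputable def Gf (μ β : ℝ) (n : ℕ) (θ Y : ℕ → ℝ) (j : ℕ) : ℝ :=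
  Real.exp (-(∑ i ∈ Finset.Icc 1 (j - 1), Sf θ n (i + 1) * (Y i - Y (i - 1))) / μ) *
    ((1 / μ) * ∫ u in (Y (j - 1))..(Y j),
      Sf θ n (j + 1) * Real.exp (-(Sf θ n (j + 1) * (u - Y (j - 1))) / μ) *
        (β⁻¹ * u ^ (-β)))

lemma Ff_to_Gf (μ β : ℝ) (θ Y : ℕ → ℝ) {n : ℕ} (hn : 1 ≤ n) (j : ℕ) :
    Ff μ β (n - 1) (fun i => θ (i + 1)) Y j = Gf μ β n θ Y j := by
  unfold Ff Gf
  simp only [Sf_shift θ hn]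

lemma integrable_aux {β : ℝ} (hb1 : β < 1) (μ c a b : ℝ) :
    IntervalIntegrable (fun u : ℝ => c * Real.exp (-(c * u) / μ) * (β⁻¹ * u ^ (-β)))
      MeasureTheory.volume a b := by
  have h1 : IntervalIntegrable (fun u : ℝ => u ^ (-β)) MeasureTheory.volume a b :=
    intervalIntegral.intervalIntegrable_rpow' (by linarith)
  have h2 := h1.continuousOn_mul (g := fun u : ℝ => c * Real.exp (-(c * u) / μ) * β⁻¹)
    (by fun_prop)
  convert h2 using 1
  funext u
  ring

lemma exp_int (μ β c s a b : ℝ) :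
    (∫ u in a..b, c * Real.exp (-(c * (u - s)) / μ) * (β⁻¹ * u ^ (-β)))
      = Real.exp (c * s / μ) *
        ∫ u in a..b, c * Real.exp (-(c * u) / μ) * (β⁻¹ * u ^ (-β)) := by
  rw [← intervalIntegral.integral_const_mul]
  apply intervalIntegral.integral_congr
  intro u _
  dsimp only
  have h : -(c * (u - s)) / μ = c * s / μ + -(c * u) / μ := by ring
  rw [h, Real.exp_add]
  ring

lemma xiOne_eq (μ β c y : ℝ) :
    (1 / μ) * ∫ u in (0:ℝ)..y, c * Real.exp (-(c * u) / μ) * (β⁻¹ * u ^ (-β))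
      = XiOne μ β c y := by
  have h : (∫ u in (0:ℝ)..y, c * Real.exp (-(c * u) / μ) * (β⁻¹ * u ^ (-β)))
      = β⁻¹ * ∫ u in (0:ℝ)..y, c * Real.exp (-(c * u) / μ) * u ^ (-β) := by
    rw [← intervalIntegral.integral_const_mul]
    apply intervalIntegral.integral_congr
    intro u _
    ring
  rw [XiOne, h, one_div, one_div, mul_inv]
  ring

lemma exp_sum_eq (θ x : ℕ → ℝ) {n : ℕ} (hn : 1 ≤ n) (hx0 : x 0 = 0)
    (Y : ℕ → ℝ) (hY0 : Y 0 = 0) (hY : ∀ i, 1 ≤ i → Y i = x (i + 1)) (k : ℕ) :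
    ∑ i ∈ Finset.Icc 1 (k + 2), Sf θ n i * (x i - x (i - 1))
      = θ 1 * x 1 + ∑ i ∈ Finset.Icc 1 (k + 1), Sf θ n (i + 1) * (Y i - Y (i - 1)) := by
  induction k with
  | zero =>
    rw [show (2:ℕ) = 1 + 1 from rfl, Finset.sum_Icc_succ_top (by omega)]
    simp only [Finset.Icc_self, Finset.sum_singleton]
    have h1 : Y 1 = x 2 := hY 1 le_rfl
    norm_num [hx0, hY0, h1, Sf_one θ hn]
    ring
  | succ k ih =>
    have e1 : k + 1 + 2 = (k + 2) + 1 := by omega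
    have e2 : k + 1 + 1 = (k + 1) + 1 := rfl
    rw [e1, Finset.sum_Icc_succ_top (by omega), ih,
      Finset.sum_Icc_succ_top (by omega : 1 ≤ (k + 1) + 1)]
    have h1 : Y (k + 2) = x (k + 3) := hY _ (by omega)
    have h2 : Y (k + 1) = x (k + 2) := hY _ (by omega)
    have e3 : (k + 2) + 1 - 1 = k + 2 := rfl
    have e4 : (k + 1) + 1 - 1 = k + 1 := rfl
    rw [e3, e4]
    have e5 : k + 2 + 1 = k + 3 := rfl
    rw [e5, h1, h2]
    ring

lemma term_shift (μ β : ℝ) (θ x : ℕ → ℝ) {n : ℕ} (hn : 1 ≤ n) (hx0 : x 0 = 0)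
    (Y : ℕ → ℝ) (hY0 : Y 0 = 0) (hY : ∀ i, 1 ≤ i → Y i = x (i + 1))
    {j : ℕ} (hj : 2 ≤ j) :
    Ff μ β n θ x (j + 1) = Real.exp (-(θ 1 * x 1) / μ) * Gf μ β n θ Y j := by
  obtain ⟨k, rfl⟩ : ∃ k, j = k + 2 := ⟨j - 2, by omega⟩
  unfold Ff Gf
  have e1 : k + 2 + 1 - 1 = k + 2 := rfl
  have e2 : k + 2 - 1 = k + 1 := rfl
  rw [e1, e2, exp_sum_eq θ x hn hx0 Y hY0 hY k]
  have h1 : Y (k + 2) = x (k + 3) := hY _ (by omega)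
  have h2 : Y (k + 1) = x (k + 2) := hY _ (by omega)
  have e3 : k + 2 + 1 = k + 3 := rfl
  rw [e3, h1, h2]
  have h4 : -(θ 1 * x 1 + ∑ i ∈ Finset.Icc 1 (k + 1), Sf θ n (i + 1) * (Y i - Y (i - 1))) / μ
      = -(θ 1 * x 1) / μ +
        -(∑ i ∈ Finset.Icc 1 (k + 1), Sf θ n (i + 1) * (Y i - Y (i - 1))) / μ := by
    ring
  rw [h4, Real.exp_add, mul_assoc]

lemma term_two (μ β : ℝ) (hb1 : β < 1) (θ x : ℕ → ℝ) {n : ℕ} (hn : 1 ≤ n) (hx0 : x 0 = 0)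
    (Y : ℕ → ℝ) (hY0 : Y 0 = 0) (hY : ∀ i, 1 ≤ i → Y i = x (i + 1)) :
    Ff μ β n θ x 2 = Real.exp (-(θ 1 * x 1) / μ) *
      (Gf μ β n θ Y 1 - XiOne μ β (Sf θ n 2) (x 1)) := by
  unfold Ff Gf
  have e1 : (2:ℕ) - 1 = 1 := rfl
  have e2 : (1:ℕ) - 1 = 0 := rfl
  rw [e1, e2]
  rw [Finset.Icc_self, Finset.sum_singleton, e2]
  rw [show Finset.Icc 1 0 = (∅ : Finset ℕ) from rfl, Finset.sum_empty]
  rw [hY0, hY 1 le_rfl, hx0]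
  simp only [neg_zero, zero_div, Real.exp_zero, sub_zero, one_mul]
  rw [exp_int μ β (Sf θ n 2) (x 1) (x 1) (x 2)]
  have hsplit : (∫ u in (x 1)..(x 2),
        Sf θ n 2 * Real.exp (-(Sf θ n 2 * u) / μ) * (β⁻¹ * u ^ (-β)))
      = (∫ u in (0:ℝ)..(x 2),
          Sf θ n 2 * Real.exp (-(Sf θ n 2 * u) / μ) * (β⁻¹ * u ^ (-β)))
        - ∫ u in (0:ℝ)..(x 1),
            Sf θ n 2 * Real.exp (-(Sf θ n 2 * u) / μ) * (β⁻¹ * u ^ (-β)) :=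
    (intervalIntegral.integral_interval_sub_left (integrable_aux hb1 μ _ 0 (x 2))
      (integrable_aux hb1 μ _ 0 (x 1))).symm
  rw [hsplit, ← xiOne_eq μ β (Sf θ n 2) (x 1)]
  have hexp : Real.exp (-(Sf θ n 1 * x 1) / μ) * Real.exp (Sf θ n 2 * x 1 / μ)
      = Real.exp (-(θ 1 * x 1) / μ) := by
    rw [← Real.exp_add]
    congr 1
    rw [Sf_one θ hn]
    ring
  rw [← hexp]
  ring

end XiRecAux

open XiRecAux in
/-- Recursion for the explicit functions `Ξ_n` (Lemma 15 of the paper):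
`Ξ_n(θ_1,…,θ_n; x_1,…,x_n) - Ξ_1(θ_1+⋯+θ_n; x_1)
  = e^{-θ_1 x_1/μ} (Ξ_{n-1}(θ_2,…,θ_n; x_2,…,x_n) - Ξ_1(θ_2+⋯+θ_n; x_1))`. -/
theorem xiFun_recursion (μ β : ℝ) (hmu : 0 < μ) (hb0 : 0 < β) (hb1 : β < 1)
    (n : ℕ) (hn : 2 ≤ n) (θ x : ℕ → ℝ) (hx0 : x 0 = 0)
    (hmono : ∀ i, i < n → x i ≤ x (i + 1)) :
    XiFun μ β n θ x - XiOne μ β (∑ i ∈ Finset.Icc 1 n, θ i) (x 1)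
      = Real.exp (-(θ 1 * x 1) / μ) *
        (XiFun μ β (n - 1) (fun i => θ (i + 1)) (fun i => x (i + 1))
          - XiOne μ β (∑ i ∈ Finset.Icc 2 n, θ i) (x 1)) := by
  have hn1 : 1 ≤ n := by omega
  have hXx : (fun i => if i = 0 then 0 else x i) = x := by
    funext i
    by_cases h : i = 0 <;> simp [h, hx0]
  set Y : ℕ → ℝ := fun i => if i = 0 then 0 else x (i + 1) with hYdef
  have hY0 : Y 0 = 0 := by simp [hYdef]
  have hY : ∀ i, 1 ≤ i → Y i = x (i + 1) := by
    intro i hi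
    simp [hYdef, Nat.one_le_iff_ne_zero.mp hi]
  have hXiF : XiFun μ β n θ x = ∑ j ∈ Finset.Icc 1 n, Ff μ β n θ x j := by
    conv_rhs => rw [← hXx]
    rfl
  have hXiG : XiFun μ β (n - 1) (fun i => θ (i + 1)) (fun i => x (i + 1))
      = ∑ j ∈ Finset.Icc 1 (n - 1), Gf μ β n θ Y j := by
    have : XiFun μ β (n - 1) (fun i => θ (i + 1)) (fun i => x (i + 1))
        = ∑ j ∈ Finset.Icc 1 (n - 1), Ff μ β (n - 1) (fun i => θ (i + 1)) Y j := rfl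
    rw [this]
    exact Finset.sum_congr rfl fun j _ => Ff_to_Gf μ β θ Y hn1 j
  have hS1 : (∑ i ∈ Finset.Icc 1 n, θ i) = Sf θ n 1 := rfl
  have hS2 : (∑ i ∈ Finset.Icc 2 n, θ i) = Sf θ n 2 := rfl
  rw [hXiF, hXiG, hS1, hS2]
  -- split off the first term of the big sum, and reindex the rest
  rw [sum_split_bot _ hn1]
  have hreidx : (∑ j ∈ Finset.Icc 2 n, Ff μ β n θ x j)
      = ∑ j ∈ Finset.Icc 1 (n - 1), Ff μ β n θ x (j + 1) := by
    rw [← sum_shift_idx (Ff μ β n θ x) 1 (n - 1)]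
    congr 2
    omega
  rw [hreidx]
  -- first original term equals Ξ₁(S₁; x₁)
  have hF1 : Ff μ β n θ x 1 = XiOne μ β (Sf θ n 1) (x 1) := by
    unfold Ff
    rw [show (1:ℕ) - 1 = 0 from rfl, show Finset.Icc 1 0 = (∅ : Finset ℕ) from rfl,
      Finset.sum_empty, hx0]
    simp only [neg_zero, zero_div, Real.exp_zero, sub_zero, one_mul]
    exact xiOne_eq μ β (Sf θ n 1) (x 1)
  -- split off the first terms of the remaining sums
  have hm1 : 1 ≤ n - 1 := by omega
  rw [sum_split_bot (fun j => Ff μ β n θ x (j + 1)) hm1, sum_split_bot _ hm1]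
  have hsum : (∑ j ∈ Finset.Icc 2 (n - 1), Ff μ β n θ x (j + 1))
      = ∑ j ∈ Finset.Icc 2 (n - 1), Real.exp (-(θ 1 * x 1) / μ) * Gf μ β n θ Y j :=
    Finset.sum_congr rfl fun j hj =>
      term_shift μ β θ x hn1 hx0 Y hY0 hY (Finset.mem_Icc.mp hj).1
  rw [hsum, hF1, term_two μ β hb1 θ x hn1 hx0 Y hY0 hY, ← Finset.mul_sum]
  ring
end
end
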